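/- Assume the Verblunsky coefficients satisfy the decay hypothesis (1.5). Then there exist Δ_1 ∈ (0,1), functions s_n analytic on the annulus 𝔸 = {z : bΔ_1 < |z| < 1} with sup_{z ∈ K} |s_n(z)| → 0 faster than (bΔ_1)^n on compact K ⊂ 𝔸 (namely |s_n(z)| ≤ C (bΔ_1)^n (|z| − bΔ_1)^{-1}, where s_n(z) = Σ_{j=0}^∞ z^{-j-1} R_{n+j}(z) with R_n(z) = conj(α_n)Φ_n*(z) − S(z) Σ_ℓ conj(C_ℓ) conj(b_ℓ)^n), and a function f analytic on 𝔸 ∖ {conj(b_1), …, conj(b_L)} with f(z) = conj(S(1/conj(z))) whenever b < |z| < 1, such that for all n ≥ 0 and all z ∈ 𝔸 ∖ {conj(b_1), …, conj(b_L)}: Φ_n(z) = s_n(z) + S(z) Σ_{ℓ=1}^L conj(C_ℓ) conj(b_ℓ)^n (z − conj(b_ℓ))^{-1} + z^n f(z). -/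

import Mathlib

/-!
In terms of `σ_n = Σ_ℓ conj C_ℓ conj b_ℓ ^ n`, the Szegő recursion reads
`Φ_{n+1} = z Φ_n - R_n - S σ_n`. The tail series `s_n` and the pole sum
`T_n(z) = Σ_ℓ conj C_ℓ conj b_ℓ ^ n / (z - conj b_ℓ)` solve `z s_n = R_n + s_{n+1}` and
`z T_n = σ_n + T_{n+1}`, so `Φ_n - s_n - S T_n` is multiplied by `z` at each step: it equals
`z ^ n f` with `f = 1 - s_0 - S T_0`.

The series `s_n` converges, with the stated bound, because `R_n = O((b Δ₁) ^ n)` on the unit disk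
for `Δ₁ = max b Δ`: by (1.5) `α_n = O(b ^ n)`, so `Φ_n^*` is bounded on the closed disk and tends
to `S` at rate `b ^ n`, and `R_n = σ_n (Φ_n^* - S) + conj (α_n - Σ_ℓ C_ℓ b_ℓ ^ n) Φ_n^*` is
`O(b ^ (2 n) + (b Δ) ^ n)`.

For `|z| > b`, `z⁻ⁿ Φ_n(z) = conj Φ_n^*(1 / conj z) → conj S(1 / conj z)`, while `z⁻ⁿ s_n(z)` and
`z⁻ⁿ T_n(z)` tend to `0`; this identifies `f`.
-/

open Polynomial Filter Topology

/-- The monic orthogonal polynomials on the unit circle, defined by the Szegő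
recursion `Φ₀ = 1`, `Φ_{n+1}(z) = z Φ_n(z) - conj(α_n) Φ_n^*(z)`, where the reversed
polynomial is `P^*(z) = Σ_{j=0}^n conj(c_{n-j}) z^j`. -/
noncomputable def PhiP (α : ℕ → ℂ) : ℕ → Polynomial ℂ
  | 0 => 1
  | n + 1 => X * PhiP α n -
      Polynomial.C ((starRingEnd ℂ) (α n)) *
        Polynomial.reflect n (Polynomial.map (starRingEnd ℂ) (PhiP α n))

/-- The reversed polynomial `Φ_n^*(z) = z^n conj(Φ_n(1/conj z))`. -/
noncomputable def PhiStarP (α : ℕ → ℂ) (n : ℕ) : Polynomial ℂ :=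
  Polynomial.reflect n (Polynomial.map (starRingEnd ℂ) (PhiP α n))

/-- `R_n(z) = conj(α_n) Φ_n^*(z) - S(z) Σ_ℓ conj(C_ℓ) conj(b_ℓ)^n`. -/
noncomputable def Rfun (α : ℕ → ℂ) (S : ℂ → ℂ) {L : ℕ} (Cs bs : Fin L → ℂ)
    (n : ℕ) (z : ℂ) : ℂ :=
  (starRingEnd ℂ) (α n) * (PhiStarP α n).eval z -
    S z * ∑ ℓ : Fin L, (starRingEnd ℂ) (Cs ℓ) * ((starRingEnd ℂ) (bs ℓ)) ^ n

/-- `s_n(z) = Σ_{j=0}^∞ z^{-j-1} R_{n+j}(z)`. -/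
noncomputable def sfun (α : ℕ → ℂ) (S : ℂ → ℂ) {L : ℕ} (Cs bs : Fin L → ℂ)
    (n : ℕ) (z : ℂ) : ℂ :=
  ∑' j : ℕ, (z ^ (j + 1))⁻¹ * Rfun α S Cs bs (n + j) z

open ComplexConjugate

theorem differentiableOn_of_norm_sub_le_geometric {F : ℕ → ℂ → ℂ} {g : ℂ → ℂ} {U : Set ℂ}
    (hU : IsOpen U) (hF : ∀ n, DifferentiableOn ℂ (F n) U) {D r : ℝ} (hr0 : 0 ≤ r)
    (hr1 : r < 1) (hFg : ∀ n, ∀ z ∈ U, ‖F n z - g z‖ ≤ D * r ^ n) :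
    DifferentiableOn ℂ g U := by
  have hunif : TendstoUniformlyOn F g atTop U := by
    rw [Metric.tendstoUniformlyOn_iff]
    intro ε hε
    have h0 : Tendsto (fun n => D * r ^ n) atTop (𝓝 0) := by
      simpa using (tendsto_pow_atTop_nhds_zero_of_lt_one hr0 hr1).const_mul D
    filter_upwards [h0.eventually (gt_mem_nhds hε)] with n hn z hz
    rw [dist_comm, dist_eq_norm]
    exact (hFg n z hz).trans_lt hn
  exact hunif.tendstoLocallyUniformlyOn.differentiableOn (.of_forall hF) hU

theorem tendsto_inv_pow_mul_nhds_zero {u : ℕ → ℂ} {c q : ℝ} (hq : 0 ≤ q) {z : ℂ}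
    (hz : q < ‖z‖) (hu : ∀ n, ‖u n‖ ≤ c * q ^ n) :
    Tendsto (fun n => (z ^ n)⁻¹ * u n) atTop (𝓝 0) := by
  have hz0 : 0 < ‖z‖ := hq.trans_lt hz
  refine squeeze_zero_norm (fun n => ?_) (by simpa using (tendsto_pow_atTop_nhds_zero_of_lt_one
    (by positivity) ((div_lt_one hz0).2 hz)).const_mul c)
  rw [norm_mul, norm_inv, norm_pow, div_pow, ← mul_div_assoc, inv_mul_eq_div]
  exact div_le_div_of_nonneg_right (hu n) (by positivity)

theorem eq_add_pow_mul_of_recurrence {z S : ℂ} {P s T R σ : ℕ → ℂ}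
    (hP : ∀ n, P (n + 1) = z * P n - (R n + S * σ n)) (hs : ∀ n, z * s n = R n + s (n + 1))
    (hT : ∀ n, z * T n = σ n + T (n + 1)) (n : ℕ) :
    P n = s n + S * T n + z ^ n * (P 0 - s 0 - S * T 0) := by
  induction n with
  | zero => ring
  | succ n ih =>
    rw [hP, ih, pow_succ]
    linear_combination hs n + S * hT n

theorem norm_sum_mul_pow_le {ι : Type*} [Fintype ι] (c β : ι → ℂ) {b : ℝ}
    (hβ : ∀ ℓ, ‖β ℓ‖ ≤ b) (n : ℕ) :
    ‖∑ ℓ, c ℓ * β ℓ ^ n‖ ≤ (∑ ℓ, ‖c ℓ‖) * b ^ n := by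
  refine (norm_sum_le _ _).trans ?_
  rw [Finset.sum_mul]
  gcongr with ℓ
  rw [norm_mul, norm_pow]
  gcongr
  exact hβ ℓ

theorem norm_le_of_norm_sub_sum_mul_pow_le {ι : Type*} [Fintype ι] {a : ℂ} (c β : ι → ℂ)
    {A b Δ : ℝ} (hβ : ∀ ℓ, ‖β ℓ‖ ≤ b) (hA : 0 ≤ A) (hb : 0 ≤ b) (hΔ0 : 0 ≤ Δ) (hΔ1 : Δ ≤ 1)
    {n : ℕ} (h : ‖a - ∑ ℓ, c ℓ * β ℓ ^ n‖ ≤ A * (b * Δ) ^ n) :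
    ‖a‖ ≤ ((∑ ℓ, ‖c ℓ‖) + A) * b ^ n := by
  have hbΔ : (b * Δ) ^ n ≤ b ^ n :=
    pow_le_pow_left₀ (by positivity) (mul_le_of_le_one_right hb hΔ1) n
  calc ‖a‖ ≤ ‖a - ∑ ℓ, c ℓ * β ℓ ^ n‖ + ‖∑ ℓ, c ℓ * β ℓ ^ n‖ := norm_le_norm_sub_add _ _
    _ ≤ A * b ^ n + (∑ ℓ, ‖c ℓ‖) * b ^ n := by
        gcongr
        exacts [h.trans (by gcongr), norm_sum_mul_pow_le c β hβ n]
    _ = ((∑ ℓ, ‖c ℓ‖) + A) * b ^ n := by ring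

noncomputable def tailSeries (R : ℕ → ℂ → ℂ) (n : ℕ) (z : ℂ) : ℂ :=
  ∑' j : ℕ, (z ^ (j + 1))⁻¹ * R (n + j) z

section TailSeries

variable {R : ℕ → ℂ → ℂ} {K q : ℝ}

theorem norm_tailSeries_term_le {z : ℂ} {r : ℝ} (hr : 0 < r) (hrz : r ≤ ‖z‖) {n j : ℕ}
    (hR : ‖R (n + j) z‖ ≤ K * q ^ (n + j)) :
    ‖(z ^ (j + 1))⁻¹ * R (n + j) z‖ ≤ K * q ^ n / r * (q / r) ^ j := by
  have hK : 0 ≤ K * q ^ (n + j) := (norm_nonneg _).trans hR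
  calc ‖(z ^ (j + 1))⁻¹ * R (n + j) z‖ = (‖z‖ ^ (j + 1))⁻¹ * ‖R (n + j) z‖ := by
        rw [norm_mul, norm_inv, norm_pow]
    _ ≤ (r ^ (j + 1))⁻¹ * (K * q ^ (n + j)) := by gcongr
    _ = K * q ^ n / r * (q / r) ^ j := by rw [pow_add, pow_succ, div_pow]; field_simp; ring

theorem summable_tailSeries_term {z : ℂ} (hq : 0 ≤ q) (hz : q < ‖z‖)
    (hR : ∀ m, ‖R m z‖ ≤ K * q ^ m) (n : ℕ) :
    Summable fun j => (z ^ (j + 1))⁻¹ * R (n + j) z := by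
  have hz0 : 0 < ‖z‖ := hq.trans_lt hz
  exact .of_norm_bounded ((summable_geometric_of_lt_one (by positivity)
    ((div_lt_one hz0).2 hz)).mul_left (K * q ^ n / ‖z‖))
    fun j => norm_tailSeries_term_le hz0 le_rfl (hR _)

theorem norm_tailSeries_le {z : ℂ} (hq : 0 ≤ q) (hz : q < ‖z‖)
    (hR : ∀ m, ‖R m z‖ ≤ K * q ^ m) (n : ℕ) :
    ‖tailSeries R n z‖ ≤ K * q ^ n * (‖z‖ - q)⁻¹ := by
  have hz0 : 0 < ‖z‖ := hq.trans_lt hz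
  have hratio : q / ‖z‖ < 1 := (div_lt_one hz0).2 hz
  have hgeom := (summable_geometric_of_lt_one (by positivity) hratio).mul_left (K * q ^ n / ‖z‖)
  have hterm j := norm_tailSeries_term_le (n := n) (j := j) hz0 le_rfl (hR _)
  calc ‖tailSeries R n z‖ ≤ ∑' j, K * q ^ n / ‖z‖ * (q / ‖z‖) ^ j :=
        tsum_of_norm_bounded hgeom.hasSum hterm
    _ = K * q ^ n * (‖z‖ - q)⁻¹ := by
        rw [tsum_mul_left, tsum_geometric_of_lt_one (by positivity) hratio]
        field_simp [(sub_pos.2 hz).ne']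

theorem mul_tailSeries {z : ℂ} (hq : 0 ≤ q) (hz : q < ‖z‖)
    (hR : ∀ m, ‖R m z‖ ≤ K * q ^ m) (n : ℕ) :
    z * tailSeries R n z = R n z + tailSeries R (n + 1) z := by
  have hz0 : z ≠ 0 := norm_pos_iff.1 (hq.trans_lt hz)
  have hshift : (fun j => z * ((z ^ (j + 1))⁻¹ * R (n + j) z)) =
      fun j => (z ^ j)⁻¹ * R (n + j) z := by
    ext j
    rw [pow_succ]
    field_simp
  have hsum : Summable fun j => (z ^ j)⁻¹ * R (n + j) z :=
    hshift ▸ (summable_tailSeries_term hq hz hR n).mul_left z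
  rw [tailSeries, ← tsum_mul_left, hshift, hsum.tsum_eq_zero_add]
  simp only [pow_zero, inv_one, one_mul, add_zero, tailSeries, add_right_comm n, add_assoc]

theorem analyticOnNhd_tailSeries {U : Set ℂ} (hU : IsOpen U) (hq : 0 ≤ q)
    (hRd : ∀ m, DifferentiableOn ℂ (R m) U) (hR : ∀ m, ∀ z ∈ U, ‖R m z‖ ≤ K * q ^ m) (n : ℕ) :
    AnalyticOnNhd ℂ (tailSeries R n) {z | q < ‖z‖ ∧ z ∈ U} := by
  rintro z₀ ⟨hqz₀, hz₀U⟩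
  obtain ⟨r, hqr, hrz₀⟩ := exists_between hqz₀
  have hr : 0 < r := hq.trans_lt hqr
  set V := {z : ℂ | r < ‖z‖} ∩ U
  have hV : IsOpen V := (isOpen_lt continuous_const continuous_norm).inter hU
  have hdiff : DifferentiableOn ℂ (tailSeries R n) V := by
    refine Complex.differentiableOn_tsum_of_summable_norm ((summable_geometric_of_lt_one
      (by positivity) ((div_lt_one hr).2 hqr)).mul_left (K * q ^ n / r)) (fun j => ?_) hV
      fun j z hz => norm_tailSeries_term_le hr hz.1.le (hR _ z hz.2)
    have hinv : DifferentiableOn ℂ (fun z : ℂ => (z ^ (j + 1))⁻¹) V :=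
      (differentiable_pow _).differentiableOn.inv
        fun z hz => pow_ne_zero _ (norm_pos_iff.1 (hr.trans hz.1))
    exact hinv.mul ((hRd _).mono Set.inter_subset_right)
  exact hdiff.analyticOnNhd hV z₀ ⟨hrz₀, hz₀U⟩

end TailSeries

noncomputable def poleSum {ι : Type*} [Fintype ι] (c β : ι → ℂ) (n : ℕ) (z : ℂ) : ℂ :=
  ∑ ℓ, c ℓ * β ℓ ^ n * (z - β ℓ)⁻¹

section PoleSum

variable {ι : Type*} [Fintype ι] (c β : ι → ℂ)

theorem mul_poleSum {z : ℂ} (hz : ∀ ℓ, z ≠ β ℓ) (n : ℕ) :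
    z * poleSum c β n z = ∑ ℓ, c ℓ * β ℓ ^ n + poleSum c β (n + 1) z := by
  simp only [poleSum, Finset.mul_sum, ← Finset.sum_add_distrib]
  refine Finset.sum_congr rfl fun ℓ _ => ?_
  have hzβ := sub_ne_zero.2 (hz ℓ)
  field_simp
  ring

theorem norm_poleSum_le {b : ℝ} (hβ : ∀ ℓ, ‖β ℓ‖ ≤ b) {z : ℂ} (hz : b < ‖z‖) (n : ℕ) :
    ‖poleSum c β n z‖ ≤ (∑ ℓ, ‖c ℓ‖) * (‖z‖ - b)⁻¹ * b ^ n := by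
  refine (norm_sum_le _ _).trans ?_
  rw [Finset.sum_mul, Finset.sum_mul]
  gcongr with ℓ
  rw [norm_mul, norm_mul, norm_pow, norm_inv, mul_right_comm]
  gcongr
  · exact (sub_le_sub_left (hβ ℓ) _).trans (norm_sub_norm_le _ _)
  · exact hβ ℓ

theorem analyticAt_poleSum {z : ℂ} (hz : ∀ ℓ, z ≠ β ℓ) (n : ℕ) :
    AnalyticAt ℂ (poleSum c β n) z :=
  Finset.analyticAt_fun_sum _ fun ℓ _ =>
    analyticAt_const.mul ((analyticAt_id.sub analyticAt_const).inv (sub_ne_zero.2 (hz ℓ)))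

end PoleSum

section Szego

variable (α : ℕ → ℂ)

theorem natDegree_PhiP_le (n : ℕ) : (PhiP α n).natDegree ≤ n := by
  induction n with
  | zero => simp [PhiP]
  | succ n ih =>
    rw [PhiP]
    refine (natDegree_sub_le _ _).trans (max_le ?_ ?_)
    · exact natDegree_mul_le.trans (by simp; omega)
    · exact (natDegree_C_mul_le _ _).trans (natDegree_reflect_le.trans (by simp; omega))

theorem eval_PhiP_succ (n : ℕ) (z : ℂ) :
    (PhiP α (n + 1)).eval z = z * (PhiP α n).eval z - conj (α n) * (PhiStarP α n).eval z := by
  simp [PhiP, PhiStarP]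

theorem PhiStarP_succ (n : ℕ) :
    PhiStarP α (n + 1) = PhiStarP α n - C (α n) * (X * PhiP α n) := by
  have reflect_X_mul {Q : ℂ[X]} (hQ : Q.natDegree ≤ n) :
      reflect (n + 1) (X * Q) = reflect n Q := by
    rw [add_comm, reflect_mul X Q natDegree_X_le hQ, reflect_one_X, one_mul]
  have hdeg := natDegree_PhiP_le α n
  have hreflect : reflect (n + 1) (reflect n (PhiP α n)) = X * PhiP α n := by
    rw [← reflect_X_mul hdeg, reflect_reflect]
  simp only [PhiStarP, PhiP, Polynomial.map_sub, Polynomial.map_mul, Polynomial.map_X, map_C,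
    reflect_sub, reflect_C_mul, ← reflect_map, Polynomial.map_map, RingHomCompTriple.comp_eq,
    Polynomial.map_id, Complex.conj_conj, hreflect]
  rw [reflect_X_mul (by simpa using hdeg)]

theorem eval_PhiStarP_succ (n : ℕ) (z : ℂ) :
    (PhiStarP α (n + 1)).eval z = (PhiStarP α n).eval z - α n * (z * (PhiP α n).eval z) := by
  simp [PhiStarP_succ]

theorem eval_PhiStarP_inv_conj_mul_pow (n : ℕ) {z : ℂ} (hz : z ≠ 0) :
    (PhiStarP α n).eval (conj z)⁻¹ * conj z ^ n = conj ((PhiP α n).eval z) := by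
  have : Invertible (conj z) := invertibleOfNonzero (by simpa using hz)
  have h := eval₂_reflect_mul_pow (RingHom.id ℂ) (conj z) n _
    (by simpa using natDegree_PhiP_le α n : ((PhiP α n).map (starRingEnd ℂ)).natDegree ≤ n)
  rwa [invOf_eq_inv, eval₂_id, eval₂_id, eval_map, eval₂_at_apply] at h

theorem conj_eval_PhiStarP_inv_conj (n : ℕ) {z : ℂ} (hz : z ≠ 0) :
    conj ((PhiStarP α n).eval (conj z)⁻¹) = (z ^ n)⁻¹ * (PhiP α n).eval z := by
  rw [eq_inv_mul_iff_mul_eq₀ (pow_ne_zero _ hz), ← Complex.conj_conj ((PhiP α n).eval z),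
    ← eval_PhiStarP_inv_conj_mul_pow α n hz, map_mul, map_pow, Complex.conj_conj, mul_comm]

theorem norm_eval_PhiP_le_prod_and_norm_eval_PhiStarP_le_prod (n : ℕ) {z : ℂ}
    (hz : ‖z‖ ≤ 1) :
    ‖(PhiP α n).eval z‖ ≤ ∏ k ∈ Finset.range n, (1 + ‖α k‖) ∧
      ‖(PhiStarP α n).eval z‖ ≤ ∏ k ∈ Finset.range n, (1 + ‖α k‖) := by
  induction n with
  | zero => simp [PhiStarP, PhiP]
  | succ n ih =>
    obtain ⟨hP, hP'⟩ := ih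
    set Q := ∏ k ∈ Finset.range n, (1 + ‖α k‖)
    have hzP : ‖z * (PhiP α n).eval z‖ ≤ Q := by
      rw [norm_mul]
      exact (mul_le_of_le_one_left (norm_nonneg _) hz).trans hP
    rw [Finset.prod_range_succ, eval_PhiP_succ, eval_PhiStarP_succ]
    constructor
    · calc _ ≤ ‖z * (PhiP α n).eval z‖ + ‖conj (α n) * (PhiStarP α n).eval z‖ := norm_sub_le _ _
        _ ≤ Q + ‖α n‖ * Q := add_le_add hzP (by rw [norm_mul, Complex.norm_conj]; gcongr)
        _ = Q * (1 + ‖α n‖) := by ring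
    · calc _ ≤ ‖(PhiStarP α n).eval z‖ + ‖α n * (z * (PhiP α n).eval z)‖ := norm_sub_le _ _
        _ ≤ Q + ‖α n‖ * Q := add_le_add hP' (by rw [norm_mul]; gcongr)
        _ = Q * (1 + ‖α n‖) := by ring

theorem norm_eval_PhiP_le_exp_and_norm_eval_PhiStarP_le_exp (hα : Summable fun k => ‖α k‖)
    (n : ℕ) {z : ℂ} (hz : ‖z‖ ≤ 1) :
    ‖(PhiP α n).eval z‖ ≤ Real.exp (∑' k, ‖α k‖) ∧
      ‖(PhiStarP α n).eval z‖ ≤ Real.exp (∑' k, ‖α k‖) := by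
  have hprod : ∏ k ∈ Finset.range n, (1 + ‖α k‖) ≤ Real.exp (∑' k, ‖α k‖) :=
    (Real.prod_one_add_le_exp_sum _ fun _ => norm_nonneg _).trans
      (Real.exp_le_exp.2 (hα.sum_le_tsum _ fun _ _ => norm_nonneg _))
  obtain ⟨hP, hP'⟩ := norm_eval_PhiP_le_prod_and_norm_eval_PhiStarP_le_prod α n hz
  exact ⟨hP.trans hprod, hP'.trans hprod⟩

theorem norm_eval_PhiStarP_sub_le {c r M : ℝ} (hr1 : r < 1) (hα : ∀ k, ‖α k‖ ≤ c * r ^ k)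
    {z l : ℂ} (hz : ‖z‖ ≤ 1) (hM : ∀ k, ‖(PhiP α k).eval z‖ ≤ M)
    (hl : Tendsto (fun n => (PhiStarP α n).eval z) atTop (𝓝 l)) (n : ℕ) :
    ‖(PhiStarP α n).eval z - l‖ ≤ M * c * r ^ n / (1 - r) := by
  rw [← dist_eq_norm]
  refine dist_le_of_le_geometric_of_tendsto r _ hr1 (fun k => ?_) hl n
  rw [dist_eq_norm, eval_PhiStarP_succ, sub_sub_cancel, norm_mul, norm_mul]
  calc ‖α k‖ * (‖z‖ * ‖(PhiP α k).eval z‖) ≤ c * r ^ k * (1 * M) := by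
        have hc : 0 ≤ c * r ^ k := (norm_nonneg _).trans (hα k)
        gcongr
        exacts [hα k, hM k]
    _ = M * c * r ^ k := by ring

theorem eq_conj_of_eval_PhiP_eq_add_pow_mul {z l w : ℂ} (hz : z ≠ 0)
    (hl : Tendsto (fun n => (PhiStarP α n).eval (conj z)⁻¹) atTop (𝓝 l)) {u : ℕ → ℂ}
    (h : ∀ n, (PhiP α n).eval z = u n + z ^ n * w)
    (hu : Tendsto (fun n => (z ^ n)⁻¹ * u n) atTop (𝓝 0)) :
    w = conj l := by
  have hconj : Tendsto (fun n => (z ^ n)⁻¹ * (PhiP α n).eval z) atTop (𝓝 (conj l)) := by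
    simpa only [Function.comp_def, conj_eval_PhiStarP_inv_conj α _ hz] using
      (Complex.continuous_conj.tendsto l).comp hl
  have hw : Tendsto (fun n => (z ^ n)⁻¹ * (PhiP α n).eval z) atTop (𝓝 w) := by
    simp only [h, mul_add, inv_mul_cancel_left₀ (pow_ne_zero _ hz)]
    simpa using hu.add_const w
  exact tendsto_nhds_unique hw hconj

end Szego

section Rfun

variable (α : ℕ → ℂ) (S : ℂ → ℂ) {L : ℕ} {Cs bs : Fin L → ℂ}

theorem differentiableOn_Rfun {U : Set ℂ} (hS : DifferentiableOn ℂ S U) (n : ℕ) :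
    DifferentiableOn ℂ (Rfun α S Cs bs n) U :=
  ((Polynomial.differentiable _).differentiableOn.const_mul _).sub (hS.mul_const _)

theorem norm_Rfun_le {A b Δ M D : ℝ} (hb : 0 ≤ b) (hΔ : 0 ≤ Δ) (hA : 0 ≤ A) (hD : 0 ≤ D)
    (hbs : ∀ ℓ, ‖bs ℓ‖ ≤ b) {n : ℕ} {z : ℂ}
    (hdecay : ‖α n - ∑ ℓ, Cs ℓ * bs ℓ ^ n‖ ≤ A * (b * Δ) ^ n)
    (hM : ‖(PhiStarP α n).eval z‖ ≤ M) (hconv : ‖(PhiStarP α n).eval z - S z‖ ≤ D * b ^ n) :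
    ‖Rfun α S Cs bs n z‖ ≤ ((∑ ℓ, ‖Cs ℓ‖) * D + A * M) * (b * max b Δ) ^ n := by
  set σ := ∑ ℓ, conj (Cs ℓ) * conj (bs ℓ) ^ n
  set ε := α n - ∑ ℓ, Cs ℓ * bs ℓ ^ n
  have hsplit : Rfun α S Cs bs n z =
      σ * ((PhiStarP α n).eval z - S z) + conj ε * (PhiStarP α n).eval z := by
    simp only [Rfun, σ, ε, map_sub, map_sum, map_mul, map_pow]
    ring
  have hσ : ‖σ‖ ≤ (∑ ℓ, ‖Cs ℓ‖) * b ^ n := by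
    simpa using norm_sum_mul_pow_le (fun ℓ => conj (Cs ℓ)) (fun ℓ => conj (bs ℓ))
      (fun ℓ => by simpa using hbs ℓ) n
  have hM0 : 0 ≤ M := (norm_nonneg _).trans hM
  have hbb : b ^ n * b ^ n ≤ (b * max b Δ) ^ n := by
    rw [← mul_pow]
    gcongr
    exact le_max_left _ _
  have hbΔ : (b * Δ) ^ n ≤ (b * max b Δ) ^ n := by gcongr; exact le_max_right _ _
  rw [hsplit]
  calc _ ≤ ‖σ‖ * ‖(PhiStarP α n).eval z - S z‖ + ‖ε‖ * ‖(PhiStarP α n).eval z‖ := by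
        refine (norm_add_le _ _).trans_eq ?_
        rw [norm_mul, norm_mul, Complex.norm_conj]
    _ ≤ (∑ ℓ, ‖Cs ℓ‖) * b ^ n * (D * b ^ n) + A * (b * Δ) ^ n * M := by gcongr
    _ = (∑ ℓ, ‖Cs ℓ‖) * D * (b ^ n * b ^ n) + A * M * (b * Δ) ^ n := by ring
    _ ≤ (∑ ℓ, ‖Cs ℓ‖) * D * (b * max b Δ) ^ n + A * M * (b * max b Δ) ^ n := by gcongr
    _ = _ := by ring

theorem differentiableOn_and_exists_norm_Rfun_le_of_decay {b Δ A : ℝ} (hb0 : 0 < b)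
    (hb1 : b < 1) (hbs : ∀ ℓ, ‖bs ℓ‖ ≤ b) (hΔ0 : 0 < Δ) (hΔ1 : Δ < 1) (hA : 0 < A)
    (hdecay : ∀ n, ‖α n - ∑ ℓ, Cs ℓ * bs ℓ ^ n‖ ≤ A * (b * Δ) ^ n)
    (hS : ∀ z : ℂ, ‖z‖ < 1 / b → Tendsto (fun n => (PhiStarP α n).eval z) atTop (𝓝 (S z))) :
    DifferentiableOn ℂ S {z | ‖z‖ < 1} ∧ ∃ K, 0 < K ∧
      ∀ n, ∀ z ∈ {z : ℂ | ‖z‖ < 1}, ‖Rfun α S Cs bs n z‖ ≤ K * (b * max b Δ) ^ n := by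
  set c := ∑ ℓ, ‖Cs ℓ‖
  set M := Real.exp (∑' k, ‖α k‖)
  set D := M * (c + A) / (1 - b)
  have hαb n : ‖α n‖ ≤ (c + A) * b ^ n := norm_le_of_norm_sub_sum_mul_pow_le Cs bs
    hbs hA.le hb0.le hΔ0.le hΔ1.le (hdecay n)
  have hsum : Summable fun k => ‖α k‖ := .of_nonneg_of_le (fun _ => norm_nonneg _) hαb
    ((summable_geometric_of_lt_one hb0.le hb1).mul_left _)
  have hM n {z : ℂ} (hz : ‖z‖ ≤ 1) :=
    norm_eval_PhiP_le_exp_and_norm_eval_PhiStarP_le_exp α hsum n hz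
  have hconv : ∀ n, ∀ z ∈ {z : ℂ | ‖z‖ < 1}, ‖(PhiStarP α n).eval z - S z‖ ≤ D * b ^ n :=
    fun n z hz => (norm_eval_PhiStarP_sub_le α hb1 hαb hz.le (fun k => (hM k hz.le).1)
      (hS z (hz.trans (one_lt_one_div hb0 hb1))) n).trans_eq (by ring)
  have hD : 0 ≤ D := div_nonneg (by positivity) (sub_pos.2 hb1).le
  refine ⟨differentiableOn_of_norm_sub_le_geometric (isOpen_lt continuous_norm continuous_const)
    (fun n => (Polynomial.differentiable _).differentiableOn) hb0.le hb1 hconv,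
    c * D + A * M, by positivity, fun n z hz => norm_Rfun_le α S hb0.le hΔ0.le hA.le hD hbs
    (hdecay n) (hM n hz.le).2 (hconv n z hz)⟩

theorem eval_PhiP_eq_of_norm_Rfun_le {K q : ℝ} (hq : 0 ≤ q) {z : ℂ} (hz : q < ‖z‖)
    (hR : ∀ m, ‖Rfun α S Cs bs m z‖ ≤ K * q ^ m) (hzb : ∀ ℓ, z ≠ conj (bs ℓ)) (n : ℕ) :
    (PhiP α n).eval z = sfun α S Cs bs n z +
      S z * poleSum (fun ℓ => conj (Cs ℓ)) (fun ℓ => conj (bs ℓ)) n z +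
      z ^ n * (1 - sfun α S Cs bs 0 z -
        S z * poleSum (fun ℓ => conj (Cs ℓ)) (fun ℓ => conj (bs ℓ)) 0 z) := by
  have h := eq_add_pow_mul_of_recurrence (S := S z) (P := fun n => (PhiP α n).eval z)
    (fun n => by rw [eval_PhiP_succ, Rfun]; ring) (mul_tailSeries hq hz hR) (mul_poleSum _ _ hzb) n
  rwa [show (PhiP α 0).eval z = 1 by simp [PhiP]] at h

theorem one_sub_sfun_sub_mul_poleSum_eq_conj {b K q : ℝ} (hq : 0 ≤ q) (hb : 0 ≤ b)
    (hbs : ∀ ℓ, ‖bs ℓ‖ ≤ b) {z l : ℂ} (hqz : q < ‖z‖) (hbz : b < ‖z‖)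
    (hR : ∀ m, ‖Rfun α S Cs bs m z‖ ≤ K * q ^ m)
    (hl : Tendsto (fun n => (PhiStarP α n).eval (conj z)⁻¹) atTop (𝓝 l)) :
    1 - sfun α S Cs bs 0 z - S z * poleSum (fun ℓ => conj (Cs ℓ)) (fun ℓ => conj (bs ℓ)) 0 z =
      conj l := by
  have hconj_bs ℓ : ‖conj (bs ℓ)‖ ≤ b := by simpa using hbs ℓ
  have hzb : ∀ ℓ, z ≠ conj (bs ℓ) := fun ℓ h => (hconj_bs ℓ).not_gt (h ▸ hbz)
  refine eq_conj_of_eval_PhiP_eq_add_pow_mul α (norm_pos_iff.1 (hq.trans_lt hqz)) hl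
    (eval_PhiP_eq_of_norm_Rfun_le α S hq hqz hR hzb) ?_
  have hpole n : ‖S z * poleSum (fun ℓ => conj (Cs ℓ)) (fun ℓ => conj (bs ℓ)) n z‖ ≤
      ‖S z‖ * ((∑ ℓ, ‖conj (Cs ℓ)‖) * (‖z‖ - b)⁻¹) * b ^ n := by
    rw [norm_mul, mul_assoc]
    gcongr
    exact norm_poleSum_le _ _ hconj_bs hbz n
  have htail n : ‖sfun α S Cs bs n z‖ ≤ K * (‖z‖ - q)⁻¹ * q ^ n :=
    (norm_tailSeries_le hq hqz hR n).trans_eq (mul_right_comm _ _ _)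
  simpa only [mul_add, add_zero] using (tendsto_inv_pow_mul_nhds_zero hq hqz htail).add
    (tendsto_inv_pow_mul_nhds_zero hb hbz hpole)

end Rfun

theorem stmt_13_general (α : ℕ → ℂ)
    (L : ℕ) (b Δ A : ℝ) (bs Cs : Fin L → ℂ)
    (hb0 : 0 < b) (hb1 : b < 1)
    (habs : ∀ ℓ, norm (bs ℓ) = b)
    (hΔ0 : 0 < Δ) (hΔ1 : Δ < 1) (hA : 0 < A)
    (hdecay : ∀ n : ℕ,
      norm (α n - ∑ ℓ : Fin L, Cs ℓ * bs ℓ ^ n) ≤ A * (b * Δ) ^ n)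
    (S : ℂ → ℂ)
    (hS : ∀ z : ℂ, norm z < 1 / b →
      Tendsto (fun n : ℕ => (PhiStarP α n).eval z) atTop (nhds (S z)))
 :
    ∃ Δ₁ : ℝ, 0 < Δ₁ ∧ Δ₁ < 1 ∧ ∃ C : ℝ, 0 < C ∧ ∃ f : ℂ → ℂ,
      (∀ n : ℕ, ∀ z : ℂ, b * Δ₁ < norm z → norm z < 1 →
        norm (sfun α S Cs bs n z) ≤
          C * (b * Δ₁) ^ n * (norm z - b * Δ₁)⁻¹) ∧
      (∀ n : ℕ, AnalyticOnNhd ℂ (sfun α S Cs bs n)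
        {z : ℂ | b * Δ₁ < norm z ∧ norm z < 1}) ∧
      AnalyticOnNhd ℂ f
        {z : ℂ | (b * Δ₁ < norm z ∧ norm z < 1) ∧
          ∀ ℓ : Fin L, z ≠ (starRingEnd ℂ) (bs ℓ)} ∧
      (∀ z : ℂ, b < norm z → norm z < 1 →
        f z = (starRingEnd ℂ) (S (((starRingEnd ℂ) z)⁻¹))) ∧
      (∀ n : ℕ, ∀ z : ℂ, b * Δ₁ < norm z → norm z < 1 →
        (∀ ℓ : Fin L, z ≠ (starRingEnd ℂ) (bs ℓ)) →
        (PhiP α n).eval z = sfun α S Cs bs n z +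
          S z * (∑ ℓ : Fin L, (starRingEnd ℂ) (Cs ℓ) * ((starRingEnd ℂ) (bs ℓ)) ^ n *
            (z - (starRingEnd ℂ) (bs ℓ))⁻¹) + z ^ n * f z) := by
  have hbs ℓ : ‖bs ℓ‖ ≤ b := (habs ℓ).le
  obtain ⟨hSd, K, hK, hR⟩ :=
    differentiableOn_and_exists_norm_Rfun_le_of_decay α S hb0 hb1 hbs hΔ0 hΔ1 hA hdecay hS
  set Δ₁ := max b Δ
  have hq : 0 ≤ b * Δ₁ := by positivity
  have hqb : b * Δ₁ < b := mul_lt_of_lt_one_right hb0 (max_lt hb1 hΔ1)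
  have hdisk : IsOpen {z : ℂ | ‖z‖ < 1} := isOpen_lt continuous_norm continuous_const
  have hs := analyticOnNhd_tailSeries hdisk hq (differentiableOn_Rfun α S hSd) hR
  refine ⟨Δ₁, by positivity, max_lt hb1 hΔ1, K, hK, fun z => 1 - sfun α S Cs bs 0 z -
      S z * poleSum (fun ℓ => conj (Cs ℓ)) (fun ℓ => conj (bs ℓ)) 0 z,
    fun n z h1 h2 => norm_tailSeries_le hq h1 (fun m => hR m z h2) n, hs, ?_, ?_,
    fun n z h1 h2 h3 => eval_PhiP_eq_of_norm_Rfun_le α S hq h1 (fun m => hR m z h2) h3 n⟩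
  · rintro z ⟨⟨h1, h2⟩, h3⟩
    exact (analyticAt_const.sub (hs 0 z ⟨h1, h2⟩)).sub
      ((hSd.analyticAt (hdisk.mem_nhds h2)).mul (analyticAt_poleSum _ _ h3 0))
  · intro z hbz hz1
    have hinv : ‖(conj z)⁻¹‖ < 1 / b := by
      rw [norm_inv, Complex.norm_conj, one_div]
      exact inv_strictAnti₀ hb0 hbz
    exact one_sub_sfun_sub_mul_poleSum_eq_conj α S hq hb0.le hbs
      (hqb.trans hbz) hbz (fun m => hR m z hz1) (hS _ hinv)

theorem stmt_13 (α : ℕ → ℂ) (hα : ∀ n, norm (α n) < 1)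
    (L : ℕ) (hL : 1 ≤ L) (b Δ A : ℝ) (bs Cs : Fin L → ℂ)
    (hb0 : 0 < b) (hb1 : b < 1) (hinj : Function.Injective bs)
    (habs : ∀ ℓ, norm (bs ℓ) = b) (hCs : ∀ ℓ, Cs ℓ ≠ 0)
    (hΔ0 : 0 < Δ) (hΔ1 : Δ < 1) (hA : 0 < A)
    (hdecay : ∀ n : ℕ,
      norm (α n - ∑ ℓ : Fin L, Cs ℓ * bs ℓ ^ n) ≤ A * (b * Δ) ^ n)
    (S : ℂ → ℂ)
    (hS : ∀ z : ℂ, norm z < 1 / b →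
      Tendsto (fun n : ℕ => (PhiStarP α n).eval z) atTop (nhds (S z)))
 :
    ∃ Δ₁ : ℝ, 0 < Δ₁ ∧ Δ₁ < 1 ∧ ∃ C : ℝ, 0 < C ∧ ∃ f : ℂ → ℂ,
      (∀ n : ℕ, ∀ z : ℂ, b * Δ₁ < norm z → norm z < 1 →
        norm (sfun α S Cs bs n z) ≤
          C * (b * Δ₁) ^ n * (norm z - b * Δ₁)⁻¹) ∧
      (∀ n : ℕ, AnalyticOnNhd ℂ (sfun α S Cs bs n)
        {z : ℂ | b * Δ₁ < norm z ∧ norm z < 1}) ∧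
      AnalyticOnNhd ℂ f
        {z : ℂ | (b * Δ₁ < norm z ∧ norm z < 1) ∧
          ∀ ℓ : Fin L, z ≠ (starRingEnd ℂ) (bs ℓ)} ∧
      (∀ z : ℂ, b < norm z → norm z < 1 →
        f z = (starRingEnd ℂ) (S (((starRingEnd ℂ) z)⁻¹))) ∧
      (∀ n : ℕ, ∀ z : ℂ, b * Δ₁ < norm z → norm z < 1 →
        (∀ ℓ : Fin L, z ≠ (starRingEnd ℂ) (bs ℓ)) →
        (PhiP α n).eval z = sfun α S Cs bs n z +
          S z * (∑ ℓ : Fin L, (starRingEnd ℂ) (Cs ℓ) * ((starRingEnd ℂ) (bs ℓ)) ^ n *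
            (z - (starRingEnd ℂ) (bs ℓ))⁻¹) + z ^ n * f z) :=
  stmt_13_general α L b Δ A bs Cs hb0 hb1 habs hΔ0 hΔ1 hA hdecay S hS
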